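/- arXiv:2311.13522 — 3 statements merged into one kernel-verified Lean document; each statement's English description precedes it below -/
import Mathlib

section
/- Let G be a finite group whose order is not divisible by 3, acting on a set Ω, such that only the identity fixes 3 or more points of Ω. Let τ be a permutation of Ω normalizing G (acting by conjugation as an automorphism of G) that cyclically permutes three distinct points P, Q, R of Ω. Then the setwise stabilizer in G of {P, Q, R} is trivial. -/
/-!
An element of `G` stabilizing `{P, Q, R}` induces a permutation of these three points. It cannot
be a 3-cycle: its cube fixes all three points, hence is trivial, and an element of order `3` is
ruled out by `3 ∤ |G|`. It cannot be a transposition either: if `γ` fixes one point and swaps the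
other two, then `(τ γ τ⁻¹) γ` is an element of `G` acting as a 3-cycle on `{P, Q, R}`. So `γ` fixes
the three points and is the identity.
-/

open Equiv

theorem Subgroup.eq_one_of_pow_eq_one_of_coprime_natCard {G : Type*} [Group G] {H : Subgroup G}
    {n : ℕ} (hn : n.Coprime (Nat.card H)) {g : G} (hg : g ∈ H) (hgn : g ^ n = 1) : g = 1 :=
  (pow_eq_one_iff_of_coprime hn).1
    ⟨hgn, orderOf_dvd_iff_pow_eq_one.1 (H.orderOf_dvd_natCard hg)⟩

section ThreePoints

variable {Ω : Type*} {G : Subgroup (Perm Ω)} {P Q R : Ω}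

theorem not_rotate_three_of_mem (hcard : ¬ 3 ∣ Nat.card G)
    (h3fix : ∀ g ∈ G, ∀ x y z : Ω, x ≠ y → y ≠ z → x ≠ z →
      g x = x → g y = y → g z = z → g = 1)
    (hPQ : P ≠ Q) (hQR : Q ≠ R) (hPR : P ≠ R)
    {δ : Perm Ω} (hδ : δ ∈ G) (hP : δ P = Q) (hQ : δ Q = R) (hR : δ R = P) : False := by
  have hcube : δ ^ 3 = 1 :=
    h3fix _ (pow_mem hδ 3) P Q R hPQ hQR hPR
      (by simp [pow_succ, hP, hQ, hR]) (by simp [pow_succ, hP, hQ, hR])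
      (by simp [pow_succ, hP, hQ, hR])
  have hone : δ = 1 := Subgroup.eq_one_of_pow_eq_one_of_coprime_natCard
    ((Nat.prime_three.coprime_iff_not_dvd).2 hcard) hδ hcube
  exact hPQ (by simpa [hone] using hP)

theorem not_swap_two_of_mem (hcard : ¬ 3 ∣ Nat.card G)
    (h3fix : ∀ g ∈ G, ∀ x y z : Ω, x ≠ y → y ≠ z → x ≠ z →
      g x = x → g y = y → g z = z → g = 1)
    {τ : Perm Ω} (hnorm : ∀ g ∈ G, τ * g * τ⁻¹ ∈ G)
    (hPQ : P ≠ Q) (hQR : Q ≠ R) (hPR : P ≠ R)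
    (hτP : τ P = Q) (hτQ : τ Q = R) (hτR : τ R = P)
    {γ : Perm Ω} (hγ : γ ∈ G) (hP : γ P = P) (hQ : γ Q = R) (hR : γ R = Q) : False := by
  have hτ'P : τ⁻¹ P = R := Perm.inv_eq_iff_eq.2 hτR.symm
  have hτ'Q : τ⁻¹ Q = P := Perm.inv_eq_iff_eq.2 hτP.symm
  have hτ'R : τ⁻¹ R = Q := Perm.inv_eq_iff_eq.2 hτQ.symm
  -- `τ γ τ⁻¹` fixes `Q` and swaps `P, R`; composed with `γ` this is the 3-cycle `(P R Q)`.
  exact not_rotate_three_of_mem hcard h3fix hPR hQR.symm hPQ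
    (mul_mem (hnorm γ hγ) hγ)
    (by simp only [Perm.mul_apply, hP, hτ'P, hR, hτQ])
    (by simp only [Perm.mul_apply, hR, hτ'Q, hP, hτP])
    (by simp only [Perm.mul_apply, hQ, hτ'R, hτR])

end ThreePoints

theorem stmt_5_general {Ω : Type*} (G : Subgroup (Equiv.Perm Ω))
    (hcard : ¬ (3 ∣ Nat.card G))
    (h3fix : ∀ g ∈ G, ∀ x y z : Ω, x ≠ y → y ≠ z → x ≠ z →
      g x = x → g y = y → g z = z → g = 1)
    (τ : Equiv.Perm Ω)
    (hnorm : ∀ g ∈ G, τ * g * τ⁻¹ ∈ G)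
    (P Q R : Ω) (hPQ : P ≠ Q) (hQR : Q ≠ R) (hPR : P ≠ R)
    (hτP : τ P = Q) (hτQ : τ Q = R) (hτR : τ R = P) :
    ∀ γ ∈ G, (⇑γ) '' ({P, Q, R} : Set Ω) = {P, Q, R} → γ = 1 := by
  intro γ hγ himg
  have hmaps : ∀ x ∈ ({P, Q, R} : Set Ω), γ x ∈ ({P, Q, R} : Set Ω) :=
    fun x hx => himg ▸ Set.mem_image_of_mem γ hx
  have hP := hmaps P (by simp)
  have hQ := hmaps Q (by simp)
  have hR := hmaps R (by simp)
  simp only [Set.mem_insert_iff, Set.mem_singleton_iff] at hP hQ hR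
  rcases hP with hP | hP | hP <;> rcases hQ with hQ | hQ | hQ <;> rcases hR with hR | hR | hR <;>
    first
    | exact h3fix γ hγ P Q R hPQ hQR hPR hP hQ hR
    | exact (not_swap_two_of_mem hcard h3fix hnorm hPQ hQR hPR hτP hτQ hτR hγ hP hQ hR).elim
    | exact (not_swap_two_of_mem hcard h3fix hnorm hQR hPR.symm hPQ.symm hτQ hτR hτP
        hγ hQ hR hP).elim
    | exact (not_swap_two_of_mem hcard h3fix hnorm hPR.symm hPQ hQR.symm hτR hτP hτQ
        hγ hR hP hQ).elim
    | exact (not_rotate_three_of_mem hcard h3fix hPR hQR.symm hPQ hγ hP hR hQ).elim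
    | exact (not_rotate_three_of_mem hcard h3fix hPR hQR.symm hPQ (inv_mem hγ)
        (Perm.inv_eq_iff_eq.2 hR.symm) (Perm.inv_eq_iff_eq.2 hQ.symm)
        (Perm.inv_eq_iff_eq.2 hP.symm)).elim
    | exact absurd (γ.injective (hP.trans hQ.symm)) hPQ
    | exact absurd (γ.injective (hQ.trans hR.symm)) hQR
    | exact absurd (γ.injective (hP.trans hR.symm)) hPR

theorem stmt_5 {Ω : Type*} (G : Subgroup (Equiv.Perm Ω)) [Finite G]
    (hcard : ¬ (3 ∣ Nat.card G))
    (h3fix : ∀ g ∈ G, ∀ x y z : Ω, x ≠ y → y ≠ z → x ≠ z →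
      g x = x → g y = y → g z = z → g = 1)
    (τ : Equiv.Perm Ω)
    (hnorm : ∀ g ∈ G, τ * g * τ⁻¹ ∈ G)
    (P Q R : Ω) (hPQ : P ≠ Q) (hQR : Q ≠ R) (hPR : P ≠ R)
    (hτP : τ P = Q) (hτQ : τ Q = R) (hτR : τ R = P) :
    ∀ γ ∈ G, (⇑γ) '' ({P, Q, R} : Set Ω) = {P, Q, R} → γ = 1 :=
  stmt_5_general G hcard h3fix τ hnorm P Q R hPQ hQR hPR hτP hτQ hτR
end

section
/- Let Γ be a thin incidence geometry over a finite type set I on which G = Aut(Γ) acts simply transitively on chambers. Fix a chamber c, and for each i ∈ I let γᵢ ∈ G be the unique element with γᵢ(c) the unique chamber i-adjacent to c. Then each γᵢ has order 2 and G = ⟨γᵢ : i ∈ I⟩, assuming the chamber graph of Γ is connected. -/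
/-!
Every chamber adjacent to `g • c` is `g • d` for a neighbour `d` of `c`, because `G` preserves
adjacency and panels are thin. Applied to `γ i • c` this makes `c` and `γ i • (γ i • c)` the same
`i`-neighbour of `γ i • c`, so `γ i ^ 2` fixes `c`; applied along a gallery from `c` it shows that
every chamber lies in the orbit of `c` under `⟨γ i⟩`. Freeness of the action turns both facts
into statements about `G`.
-/

section ThinChamberSystem

variable {G C I : Type*} [Group G] [MulAction G C] {adj : I → C → C → Prop}

theorem eq_smul_of_adj_smul
    (hGinv : ∀ (g : G) (i : I) (c d : C), adj i c d → adj i (g • c) (g • d))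
    (hthin : ∀ (i : I) (c : C), ∃! d : C, d ≠ c ∧ adj i c d)
    {i : I} {c d e : C} (g : G) (hd : d ≠ c ∧ adj i c d) (he : e ≠ g • c ∧ adj i (g • c) e) :
    e = g • d :=
  (hthin i (g • c)).unique he ⟨(smul_left_cancel_iff g).not.mpr hd.1, hGinv g i c d hd.2⟩

theorem smul_smul_self_of_adj
    (hsymm : ∀ (i : I) (c d : C), adj i c d → adj i d c)
    (hGinv : ∀ (g : G) (i : I) (c d : C), adj i c d → adj i (g • c) (g • d))
    (hthin : ∀ (i : I) (c : C), ∃! d : C, d ≠ c ∧ adj i c d)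
    {i : I} {c : C} {g : G} (hg : g • c ≠ c ∧ adj i c (g • c)) :
    g • g • c = c :=
  (eq_smul_of_adj_smul hGinv hthin g hg ⟨hg.1.symm, hsymm _ _ _ hg.2⟩).symm

theorem exists_mem_closure_smul_eq_of_reflTransGen
    (hGinv : ∀ (g : G) (i : I) (c d : C), adj i c d → adj i (g • c) (g • d))
    (hthin : ∀ (i : I) (c : C), ∃! d : C, d ≠ c ∧ adj i c d)
    {c d : C} (γ : I → G) (hγ : ∀ i : I, γ i • c ≠ c ∧ adj i c (γ i • c))
    (hcd : Relation.ReflTransGen (fun x y : C => ∃ i, adj i x y) c d) :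
    ∃ h ∈ Subgroup.closure (Set.range γ), h • c = d := by
  induction hcd with
  | refl => exact ⟨1, one_mem _, one_smul _ _⟩
  | @tail b e _ hbe ih =>
    obtain ⟨h, hh, rfl⟩ := ih
    obtain ⟨i, hadj⟩ := hbe
    by_cases heb : e = h • c
    · exact ⟨h, hh, heb.symm⟩
    · refine ⟨h * γ i, mul_mem hh (Subgroup.subset_closure ⟨i, rfl⟩), ?_⟩
      rw [mul_smul, eq_smul_of_adj_smul hGinv hthin h (hγ i) ⟨heb, hadj⟩]

end ThinChamberSystem

theorem stmt_17 {G C I : Type*} [Group G] [MulAction G C]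
    (adj : I → C → C → Prop)
    (hsymm : ∀ (i : I) (c d : C), adj i c d → adj i d c)
    (hGinv : ∀ (g : G) (i : I) (c d : C), adj i c d → adj i (g • c) (g • d))
    (hthin : ∀ (i : I) (c : C), ∃! d : C, d ≠ c ∧ adj i c d)
    (hreg : ∀ c d : C, ∃! g : G, g • c = d)
    (c : C)
    (hconn : ∀ d : C, Relation.ReflTransGen (fun x y : C => ∃ i, adj i x y) c d)
    (γ : I → G)
    (hγ : ∀ i : I, γ i • c ≠ c ∧ adj i c (γ i • c)) :
    (∀ i : I, orderOf (γ i) = 2) ∧ Subgroup.closure (Set.range γ) = ⊤ := by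
  have hfree : ∀ g h : G, g • c = h • c → g = h := fun g h hgh =>
    (hreg c (h • c)).unique hgh rfl
  refine ⟨fun i => orderOf_eq_prime ?_ ?_, eq_top_iff.mpr fun g _ => ?_⟩
  · rw [sq]
    refine hfree _ 1 ?_
    rw [mul_smul, one_smul, smul_smul_self_of_adj hsymm hGinv hthin (hγ i)]
  · exact fun h1 => (hγ i).1 (by rw [h1, one_smul])
  · obtain ⟨h, hh, hhg⟩ :=
      exists_mem_closure_smul_eq_of_reflTransGen hGinv hthin γ hγ (hconn (g • c))
    exact hfree h g hhg ▸ hh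
end

section
/- Let G act regularly (simply transitively) on the vertex set of a connected graph X, with edges colored by a set I, such that G preserves adjacency up to a permutation action on colors. If α is a color-permuting automorphism of X, then the map sending the edge-generator γᵢ to γ_{α(i)} extends to a group automorphism Φ_α of G. -/
/-!
Translate the colour-permuting automorphism so that it fixes the base vertex,
`φ g = (f 1)⁻¹ * f g`. Then `φ (g * γ i) = φ g * φ (γ i)` for every generator, and a map fixing
`1` that is multiplicative against each generator on the right is multiplicative on the group
they generate.
-/

namespace MonoidHom

variable {G H : Type*} [Group G] [Group H]

def ofSubgroupClosureEqTopRight {s : Set G} (f : G → H) (hs : Subgroup.closure s = ⊤)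
    (h1 : f 1 = 1) (hmul : ∀ x, ∀ y ∈ s, f (x * y) = f x * f y) : G →* H :=
  ofClosureMEqTopRight f (s := s ∪ s⁻¹)
    (by rw [← Subgroup.closure_toSubmonoid, hs, Subgroup.top_toSubmonoid]) h1 <| by
      rintro x y (hy | hy)
      · exact hmul x y hy
      · have hx : f x = f (x * y) * f y⁻¹ := by rw [← hmul _ _ hy, mul_inv_cancel_right]
        have hy' : f y⁻¹ = (f y)⁻¹ :=
          eq_inv_of_mul_eq_one_right <| by rw [← hmul _ _ hy, mul_inv_cancel, h1]
        rw [hx, hy', inv_mul_cancel_right]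

end MonoidHom

theorem stmt_18_general {G I : Type*} [Group G] (γ : I → G)
    (hgen : Subgroup.closure (Set.range γ) = ⊤)
    (f : G ≃ G) (π : I ≃ I)
    (hf : ∀ (g : G) (i : I), f (g * γ i) = f g * γ (π i)) :
    ∃ Φ : G ≃* G, ∀ i, Φ (γ i) = γ (π i) := by
  set φ : G ≃ G := f.trans (Equiv.mulLeft (f 1)⁻¹)
  have hφ1 : φ 1 = 1 := inv_mul_cancel (f 1)
  have hφ : ∀ g i, φ (g * γ i) = φ g * γ (π i) := fun g i => by
    simp only [φ, Equiv.trans_apply, Equiv.coe_mulLeft, hf, mul_assoc]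
  have hφγ : ∀ i, φ (γ i) = γ (π i) := fun i => by simpa [hφ1] using hφ 1 i
  let Φ : G →* G := MonoidHom.ofSubgroupClosureEqTopRight φ hgen hφ1 <| by
    rintro g _ ⟨i, rfl⟩
    rw [hφ, hφγ]
  exact ⟨MulEquiv.mk' φ Φ.map_mul, hφγ⟩

theorem stmt_18 {G I : Type*} [Group G] (γ : I → G)
    (hinv : ∀ i, γ i * γ i = 1)
    (hgen : Subgroup.closure (Set.range γ) = ⊤)
    (f : G ≃ G) (π : I ≃ I)
    (hf : ∀ (g : G) (i : I), f (g * γ i) = f g * γ (π i)) :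
    ∃ Φ : G ≃* G, ∀ i, Φ (γ i) = γ (π i) :=
  stmt_18_general γ hgen f π hf
end
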